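/- Suppose R is strictly increasing on (a,b) and let [c,d] ⊂ (a,b) be a compact subinterval. Then there is a constant C > 0 such that for all s₁, s₂ ∈ [c,d]: |⟨γ̃(s₂) − γ̃(s₁), ν(s₁)⟩ − (R(s₂) − R(s₁))| ≤ C |R(s₂) − R(s₁)| · |s₂ − s₁|², and |⟨γ̃(s₂) − γ̃(s₁), γ'(s₁)⟩| ≤ C |R(s₂) − R(s₁)| · |s₂ − s₁|. -/

import Mathlib

open Set Real Topology Filter
open scoped NNReal

noncomputable section

/-- The Euclidean plane. -/
abbrev Plane := EuclideanSpace ℝ (Fin 2)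

/-- Rotation of a plane vector by `+π/2`. -/
def Jrot (v : Plane) : Plane := WithLp.toLp 2 ![-(v 1), v 0]

local notation "⟪" x ", " y "⟫" => @inner ℝ _ _ x y

/-! The Frenet equations `T' = κ ν`, `ν' = -κ T` for the unit tangent `T = γ'` give, for every
constant `r`, `(γ + r ν)' = (1 - r κ) T = κ (R - r) T`. With `r = R s₂` this integrates to
`γ̃ s₂ - γ̃ s₁ = (R s₂ - R s₁) ν s₁ + ∫_{s₁}^{s₂} κ (R - R s₂) T`.
Monotonicity of `R` bounds `|R t - R s₂|` by `|R s₂ - R s₁|` for `t` between `s₁` and `s₂`, and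
`⟨T t, ν s₁⟩ = ⟨T t - T s₁, ν s₁⟩ = O(|s₂ - s₁|)` supplies the extra factor for the normal
component. -/

lemma inner_plane (x y : Plane) : ⟪x, y⟫ = x 0 * y 0 + x 1 * y 1 := by
  simp [PiLp.inner_apply, Fin.sum_univ_two, mul_comm]

@[simp] lemma Jrot_apply_zero (v : Plane) : Jrot v 0 = -v 1 := rfl

@[simp] lemma Jrot_apply_one (v : Plane) : Jrot v 1 = v 0 := rfl

lemma Jrot_Jrot (v : Plane) : Jrot (Jrot v) = -v := by
  ext i; fin_cases i <;> simp

lemma inner_Jrot_self (v : Plane) : ⟪Jrot v, v⟫ = 0 := by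
  rw [inner_plane, Jrot_apply_zero, Jrot_apply_one]; ring

lemma inner_self_Jrot (v : Plane) : ⟪v, Jrot v⟫ = 0 := by
  rw [real_inner_comm, inner_Jrot_self]

lemma norm_Jrot (v : Plane) : ‖Jrot v‖ = ‖v‖ := by
  simp [EuclideanSpace.norm_eq, Fin.sum_univ_two, add_comm]

lemma Jrot_add (v w : Plane) : Jrot (v + w) = Jrot v + Jrot w := by
  ext i; fin_cases i <;> simp [add_comm]

lemma Jrot_smul (c : ℝ) (v : Plane) : Jrot (c • v) = c • Jrot v := by
  ext i; fin_cases i <;> simp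

def JrotCLM : Plane →L[ℝ] Plane :=
  LinearMap.toContinuousLinearMap
    { toFun := Jrot
      map_add' := Jrot_add
      map_smul' := Jrot_smul }

lemma HasDerivAt.Jrot {f : ℝ → Plane} {f' : Plane} {t : ℝ} (hf : HasDerivAt f f' t) :
    HasDerivAt (fun s => Jrot (f s)) (Jrot f') t :=
  JrotCLM.hasFDerivAt.comp_hasDerivAt t hf

lemma eq_inner_Jrot_smul_Jrot_of_inner_eq_zero {v w : Plane} (hv : ‖v‖ = 1) (hw : ⟪w, v⟫ = 0) :
    w = ⟪w, Jrot v⟫ • Jrot v := by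
  have hv' : v 0 ^ 2 + v 1 ^ 2 = 1 := by
    have h := real_inner_self_eq_norm_sq v
    rw [hv, inner_plane] at h
    linear_combination h
  rw [inner_plane] at hw
  ext i; fin_cases i <;>
    simp only [Fin.zero_eta, Fin.mk_one, Fin.isValue, inner_plane, Jrot_apply_zero, Jrot_apply_one,
      PiLp.smul_apply, smul_eq_mul]
  · linear_combination (-w 0) * hv' + v 0 * hw
  · linear_combination (-w 1) * hv' + v 1 * hw

lemma IsCompact.exists_pos_norm_le_of_continuousOn {X E : Type*} [TopologicalSpace X]
    [SeminormedAddCommGroup E] {s : Set X} {f : X → E} (hs : IsCompact s)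
    (hf : ContinuousOn f s) : ∃ C > 0, ∀ x ∈ s, ‖f x‖ ≤ C := by
  simpa only [forall_mem_image] using (hs.image_of_continuousOn hf).isBounded.exists_pos_norm_le

lemma inner_eq_zero_of_hasDerivAt_of_norm_eq {E : Type*} [NormedAddCommGroup E]
    [InnerProductSpace ℝ E] {f : ℝ → E} {f' : E} {t r : ℝ} (hf : HasDerivAt f f' t)
    (hnorm : ∀ᶠ s in 𝓝 t, ‖f s‖ = r) : ⟪f', f t⟫ = 0 := by
  have hconst : HasDerivAt (fun s => ⟪f s, f s⟫) 0 t :=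
    (hasDerivAt_const t (r ^ 2)).congr_of_eventuallyEq <| hnorm.mono fun s hs => by
      simp only [real_inner_self_eq_norm_sq, hs]
  have h := (hf.inner ℝ hf).unique hconst
  rw [real_inner_comm] at h
  linarith

namespace PlaneCurve

def unitNormal (γ : ℝ → Plane) (s : ℝ) : Plane := Jrot (deriv γ s)

def curvature (γ : ℝ → Plane) (s : ℝ) : ℝ := ⟪deriv (deriv γ) s, unitNormal γ s⟫

def radiusOfCurvature (γ : ℝ → Plane) (s : ℝ) : ℝ := (curvature γ s)⁻¹

def evolute (γ : ℝ → Plane) (s : ℝ) : Plane := γ s + radiusOfCurvature γ s • unitNormal γ s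

variable {γ : ℝ → Plane} {t : ℝ}

lemma deriv_deriv_eq_curvature_smul_unitNormal (hT : DifferentiableAt ℝ (deriv γ) t)
    (harc : ∀ᶠ s in 𝓝 t, ‖deriv γ s‖ = 1) :
    deriv (deriv γ) t = curvature γ t • unitNormal γ t :=
  eq_inner_Jrot_smul_Jrot_of_inner_eq_zero harc.self_of_nhds
    (inner_eq_zero_of_hasDerivAt_of_norm_eq hT.hasDerivAt harc)

lemma hasDerivAt_unitNormal (hT : DifferentiableAt ℝ (deriv γ) t)
    (harc : ∀ᶠ s in 𝓝 t, ‖deriv γ s‖ = 1) :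
    HasDerivAt (unitNormal γ) (-curvature γ t • deriv γ t) t := by
  have h := hT.hasDerivAt.Jrot
  rwa [deriv_deriv_eq_curvature_smul_unitNormal hT harc, unitNormal, Jrot_smul, Jrot_Jrot,
    smul_neg, ← neg_smul] at h

lemma hasDerivAt_add_smul_unitNormal (hγ : DifferentiableAt ℝ γ t)
    (hT : DifferentiableAt ℝ (deriv γ) t) (harc : ∀ᶠ s in 𝓝 t, ‖deriv γ s‖ = 1) (r : ℝ) :
    HasDerivAt (fun s => γ s + r • unitNormal γ s) ((1 - r * curvature γ t) • deriv γ t) t := by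
  refine (hγ.hasDerivAt.add ((hasDerivAt_unitNormal hT harc).const_smul r)).congr_deriv ?_
  rw [smul_smul, sub_smul, one_smul, mul_neg, neg_smul, sub_eq_add_neg]


variable {U : Set ℝ}

lemma continuousOn_curvature (hU : IsOpen U) (hγ : ContDiffOn ℝ 2 γ U) :
    ContinuousOn (curvature γ) U := by
  have hT : ContDiffOn ℝ 1 (deriv γ) U := hγ.deriv_of_isOpen hU (by norm_num)
  exact (hT.continuousOn_deriv_of_isOpen hU le_rfl).inner
    (JrotCLM.continuous.comp_continuousOn hT.continuousOn)

lemma inner_evolute_sub_evolute (hU : IsOpen U) (hγ : ContDiffOn ℝ 2 γ U)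
    (harc : ∀ s ∈ U, ‖deriv γ s‖ = 1) {s₁ s₂ : ℝ} (hs : uIcc s₁ s₂ ⊆ U) (w : Plane) :
    ⟪evolute γ s₂ - evolute γ s₁, w⟫ =
      (radiusOfCurvature γ s₂ - radiusOfCurvature γ s₁) * ⟪unitNormal γ s₁, w⟫ +
        ∫ t in s₁..s₂, (1 - radiusOfCurvature γ s₂ * curvature γ t) * ⟪deriv γ t, w⟫ := by
  set r := radiusOfCurvature γ s₂
  have hT : ContDiffOn ℝ 1 (deriv γ) U := hγ.deriv_of_isOpen hU (by norm_num)
  have hderiv : ∀ t ∈ uIcc s₁ s₂, HasDerivAt (fun s => ⟪γ s + r • unitNormal γ s, w⟫)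
      ((1 - r * curvature γ t) * ⟪deriv γ t, w⟫) t := by
    intro t ht
    have hnhds : U ∈ 𝓝 t := hU.mem_nhds (hs ht)
    have h := (hasDerivAt_add_smul_unitNormal
      ((hγ.differentiableOn (by norm_num)).differentiableAt hnhds)
      ((hT.differentiableOn one_ne_zero).differentiableAt hnhds)
      (eventually_of_mem hnhds harc) r).inner ℝ (hasDerivAt_const t w)
    simpa only [inner_zero_right, zero_add, real_inner_smul_left] using h
  have hcont : ContinuousOn (fun t => (1 - r * curvature γ t) * ⟪deriv γ t, w⟫) (uIcc s₁ s₂) :=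
    ((continuousOn_const.sub (continuousOn_const.mul (continuousOn_curvature hU hγ))).mul
      (hT.continuousOn.inner continuousOn_const)).mono hs
  rw [intervalIntegral.integral_eq_sub_of_hasDerivAt hderiv hcont.intervalIntegrable]
  simp only [evolute, inner_add_left, inner_sub_left, real_inner_smul_left]
  ring


lemma abs_one_sub_radiusOfCurvature_mul_curvature_le (hκ : ∀ s ∈ U, curvature γ s ≠ 0)
    (hmono : MonotoneOn (radiusOfCurvature γ) U) {s₁ s₂ K : ℝ} (hs : uIcc s₁ s₂ ⊆ U)
    (hK : ∀ t ∈ uIcc s₁ s₂, ‖curvature γ t‖ ≤ K) (ht : t ∈ uIcc s₁ s₂) :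
    |1 - radiusOfCurvature γ s₂ * curvature γ t| ≤
      K * |radiusOfCurvature γ s₂ - radiusOfCurvature γ s₁| := by
  have hR : radiusOfCurvature γ t ∈ uIcc (radiusOfCurvature γ s₁) (radiusOfCurvature γ s₂) :=
    (hmono.mono hs).image_uIcc_subset (mem_image_of_mem _ ht)
  have hκR : curvature γ t * radiusOfCurvature γ t = 1 := mul_inv_cancel₀ (hκ t (hs ht))
  calc |1 - radiusOfCurvature γ s₂ * curvature γ t|
      = ‖curvature γ t‖ * |radiusOfCurvature γ s₂ - radiusOfCurvature γ t| := by
        rw [Real.norm_eq_abs, ← abs_mul, ← abs_neg]; congr 1; linear_combination hκR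
    _ ≤ K * |radiusOfCurvature γ s₂ - radiusOfCurvature γ s₁| :=
        mul_le_mul (hK t ht) (abs_sub_right_of_mem_uIcc hR) (abs_nonneg _)
          ((norm_nonneg _).trans (hK t ht))

lemma abs_inner_evolute_sub_unitNormal_sub_le (hU : IsOpen U) (hγ : ContDiffOn ℝ 2 γ U)
    (harc : ∀ s ∈ U, ‖deriv γ s‖ = 1) (hκ : ∀ s ∈ U, curvature γ s ≠ 0)
    (hmono : MonotoneOn (radiusOfCurvature γ) U) {s₁ s₂ K M : ℝ} (hs : uIcc s₁ s₂ ⊆ U)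
    (hK : ∀ t ∈ uIcc s₁ s₂, ‖curvature γ t‖ ≤ K)
    (hM : ∀ t ∈ uIcc s₁ s₂, ‖deriv (deriv γ) t‖ ≤ M) :
    |⟪evolute γ s₂ - evolute γ s₁, unitNormal γ s₁⟫ -
        (radiusOfCurvature γ s₂ - radiusOfCurvature γ s₁)| ≤
      K * M * |radiusOfCurvature γ s₂ - radiusOfCurvature γ s₁| * |s₂ - s₁| ^ 2 := by
  have hs₁ : s₁ ∈ uIcc s₁ s₂ := left_mem_uIcc
  have hν : ‖unitNormal γ s₁‖ = 1 := by rw [unitNormal, norm_Jrot, harc s₁ (hs hs₁)]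
  have hT : ContDiffOn ℝ 1 (deriv γ) U := hγ.deriv_of_isOpen hU (by norm_num)
  have hT' : ∀ t ∈ uIcc s₁ s₂, HasDerivWithinAt (deriv γ) (deriv (deriv γ) t) (uIcc s₁ s₂) t :=
    fun t ht => ((hT.differentiableOn one_ne_zero).differentiableAt
      (hU.mem_nhds (hs ht))).hasDerivAt.hasDerivWithinAt
  have hinner : ∀ t ∈ uIcc s₁ s₂, |⟪deriv γ t, unitNormal γ s₁⟫| ≤ M * |s₂ - s₁| := by
    intro t ht
    calc |⟪deriv γ t, unitNormal γ s₁⟫| = |⟪deriv γ t - deriv γ s₁, unitNormal γ s₁⟫| := by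
          rw [inner_sub_left, unitNormal, inner_self_Jrot, sub_zero]
      _ ≤ ‖deriv γ t - deriv γ s₁‖ := by
          simpa only [hν, mul_one] using abs_real_inner_le_norm _ (unitNormal γ s₁)
      _ ≤ M * ‖t - s₁‖ :=
          (convex_uIcc s₁ s₂).norm_image_sub_le_of_norm_hasDerivWithin_le hT' hM hs₁ ht
      _ ≤ M * |s₂ - s₁| :=
          mul_le_mul_of_nonneg_left (abs_sub_left_of_mem_uIcc ht) ((norm_nonneg _).trans (hM t ht))
  rw [inner_evolute_sub_evolute hU hγ harc hs, real_inner_self_eq_norm_sq, hν, one_pow, mul_one,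
    add_sub_cancel_left, ← Real.norm_eq_abs]
  calc _ ≤ K * |radiusOfCurvature γ s₂ - radiusOfCurvature γ s₁| * (M * |s₂ - s₁|) * |s₂ - s₁| := by
        refine intervalIntegral.norm_integral_le_of_norm_le_const fun t ht => ?_
        have hbound := abs_one_sub_radiusOfCurvature_mul_curvature_le hκ hmono hs hK
          (uIoc_subset_uIcc ht)
        rw [Real.norm_eq_abs, abs_mul]
        exact mul_le_mul hbound (hinner t (uIoc_subset_uIcc ht)) (abs_nonneg _)
          ((abs_nonneg _).trans hbound)
    _ = _ := by ring

lemma abs_inner_evolute_sub_deriv_le (hU : IsOpen U) (hγ : ContDiffOn ℝ 2 γ U)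
    (harc : ∀ s ∈ U, ‖deriv γ s‖ = 1) (hκ : ∀ s ∈ U, curvature γ s ≠ 0)
    (hmono : MonotoneOn (radiusOfCurvature γ) U) {s₁ s₂ K : ℝ} (hs : uIcc s₁ s₂ ⊆ U)
    (hK : ∀ t ∈ uIcc s₁ s₂, ‖curvature γ t‖ ≤ K) :
    |⟪evolute γ s₂ - evolute γ s₁, deriv γ s₁⟫| ≤
      K * |radiusOfCurvature γ s₂ - radiusOfCurvature γ s₁| * |s₂ - s₁| := by
  rw [inner_evolute_sub_evolute hU hγ harc hs, unitNormal, inner_Jrot_self, mul_zero, zero_add,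
    ← Real.norm_eq_abs]
  calc _ ≤ K * |radiusOfCurvature γ s₂ - radiusOfCurvature γ s₁| * 1 * |s₂ - s₁| := by
        refine intervalIntegral.norm_integral_le_of_norm_le_const fun t ht => ?_
        have ht' := uIoc_subset_uIcc ht
        have hbound := abs_one_sub_radiusOfCurvature_mul_curvature_le hκ hmono hs hK ht'
        have hinner : |⟪deriv γ t, deriv γ s₁⟫| ≤ 1 := by
          simpa only [harc t (hs ht'), harc s₁ (hs left_mem_uIcc), mul_one]
            using abs_real_inner_le_norm (deriv γ t) (deriv γ s₁)
        rw [Real.norm_eq_abs, abs_mul]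
        exact mul_le_mul hbound hinner (abs_nonneg _) ((abs_nonneg _).trans hbound)
    _ = _ := by ring

end PlaneCurve

open PlaneCurve in
theorem evolute_component_estimates_general
    (a b : ℝ) (γ ν ev : ℝ → Plane) (κ R : ℝ → ℝ)
    (hγ : ContDiffOn ℝ 2 γ (Ioo a b))
    (harc : ∀ s ∈ Ioo a b, ‖deriv γ s‖ = 1)
    (hν : ∀ s, ν s = Jrot (deriv γ s))
    (hκdef : ∀ s, κ s = ⟪deriv (deriv γ) s, ν s⟫)
    (hκ : ∀ s ∈ Ioo a b, κ s ≠ 0)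
    (hR : ∀ s, R s = (κ s)⁻¹)
    (hev : ∀ s, ev s = γ s + R s • ν s)
    (hmono : StrictMonoOn R (Ioo a b))
    (c d : ℝ) (hsub : Icc c d ⊆ Ioo a b) :
    ∃ C > 0, ∀ s₁ ∈ Icc c d, ∀ s₂ ∈ Icc c d,
      |⟪ev s₂ - ev s₁, ν s₁⟫ - (R s₂ - R s₁)| ≤ C * |R s₂ - R s₁| * |s₂ - s₁| ^ 2 ∧
      |⟪ev s₂ - ev s₁, deriv γ s₁⟫| ≤ C * |R s₂ - R s₁| * |s₂ - s₁| := by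
  obtain rfl : ν = unitNormal γ := funext hν
  obtain rfl : κ = curvature γ := funext hκdef
  obtain rfl : R = radiusOfCurvature γ := funext hR
  obtain rfl : ev = evolute γ := funext hev
  have hT : ContDiffOn ℝ 1 (deriv γ) (Ioo a b) := hγ.deriv_of_isOpen isOpen_Ioo (by norm_num)
  obtain ⟨K, hK0, hK⟩ := isCompact_Icc.exists_pos_norm_le_of_continuousOn
    ((continuousOn_curvature isOpen_Ioo hγ).mono hsub)
  obtain ⟨M, hM0, hM⟩ := isCompact_Icc.exists_pos_norm_le_of_continuousOn
    ((hT.continuousOn_deriv_of_isOpen isOpen_Ioo le_rfl).mono hsub)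
  refine ⟨K * (M + 1), by positivity, fun s₁ h₁ s₂ h₂ => ?_⟩
  have hI : uIcc s₁ s₂ ⊆ Icc c d := uIcc_subset_Icc h₁ h₂
  constructor
  · calc _ ≤ K * M * |radiusOfCurvature γ s₂ - radiusOfCurvature γ s₁| * |s₂ - s₁| ^ 2 :=
          abs_inner_evolute_sub_unitNormal_sub_le isOpen_Ioo hγ harc hκ hmono.monotoneOn
            (hI.trans hsub) (fun t ht => hK t (hI ht)) (fun t ht => hM t (hI ht))
      _ ≤ _ := by gcongr; linarith
  · calc _ ≤ K * |radiusOfCurvature γ s₂ - radiusOfCurvature γ s₁| * |s₂ - s₁| :=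
          abs_inner_evolute_sub_deriv_le isOpen_Ioo hγ harc hκ hmono.monotoneOn
            (hI.trans hsub) (fun t ht => hK t (hI ht))
      _ ≤ _ := by gcongr; exact le_mul_of_one_le_right hK0.le (by linarith)

/-- second-order estimates for the components of increments of the
evolute in the moving frame, uniformly on compact subintervals. -/
theorem evolute_component_estimates
    (a b : ℝ) (hab : a < b) (γ ν ev : ℝ → Plane) (κ R : ℝ → ℝ)
    (hγ : ContDiffOn ℝ 2 γ (Ioo a b))
    (harc : ∀ s ∈ Ioo a b, ‖deriv γ s‖ = 1)
    (hν : ∀ s, ν s = Jrot (deriv γ s))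
    (hκdef : ∀ s, κ s = ⟪deriv (deriv γ) s, ν s⟫)
    (hκ : ∀ s ∈ Ioo a b, κ s ≠ 0)
    (hR : ∀ s, R s = (κ s)⁻¹)
    (hev : ∀ s, ev s = γ s + R s • ν s)
    (hmono : StrictMonoOn R (Ioo a b))
    (c d : ℝ) (hcd : c ≤ d) (hsub : Icc c d ⊆ Ioo a b) :
    ∃ C > 0, ∀ s₁ ∈ Icc c d, ∀ s₂ ∈ Icc c d,
      |⟪ev s₂ - ev s₁, ν s₁⟫ - (R s₂ - R s₁)| ≤ C * |R s₂ - R s₁| * |s₂ - s₁| ^ 2 ∧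
      |⟪ev s₂ - ev s₁, deriv γ s₁⟫| ≤ C * |R s₂ - R s₁| * |s₂ - s₁| :=
  evolute_component_estimates_general a b γ ν ev κ R hγ harc hν hκdef hκ hR hev hmono c d hsub
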